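/- Let c1 > 0 be a constant such that ‖V^{−1} − S‖ ≤ c1 Q²/(q³ m n) holds for the matrices V considered. Then, in the setting m = m(n) ≤ n, Q/q = o(n), for all sufficiently large n, every V ∈ L_{m,n}(q,Q) and every vector x ∈ R^{m+n−1} satisfy ‖V^{−1} x‖_∞ ≤ c1 Q² (m+n−1) ‖x‖_∞ / (q³ m n) + |x_{m+n}|/v_{m+n,m+n} + max_{1≤i≤m+n−1} |x_i|/v_{ii}, where x_{m+n} := Σ_{i=1}^m x_i − Σ_{i=m+1}^{m+n−1} x_i. -/

import Mathlib

open MeasureTheory ProbabilityTheory Filter Matrix Topology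
open scoped ENNReal NNReal

noncomputable section

namespace Affiliation

/-- Index type for the parameter vector `θ ∈ ℝ^{m+n-1}`:
`Sum.inl i` corresponds to the coordinate `α_i` (`1 ≤ i ≤ m`),
`Sum.inr j` to the coordinate `β_j` (`1 ≤ j ≤ n-1`). -/
abbrev Idx (m n : ℕ) := Fin m ⊕ Fin (n - 1)

/-- The logistic function `e^x / (1 + e^x)`. -/
def pf (x : ℝ) : ℝ := Real.exp x / (1 + Real.exp x)

/-- `e^x / (1 + e^x)^2`, the derivative of the logistic function. -/
def pf' (x : ℝ) : ℝ := Real.exp x / (1 + Real.exp x) ^ 2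

variable {m n : ℕ} {Ω : Type*}

/-- `α_i` read off from `θ`. -/
def alphaF (θ : Idx m n → ℝ) (i : Fin m) : ℝ := θ (Sum.inl i)

/-- `β_j` read off from `θ`, with the convention `β_n = 0`. -/
def betaF (θ : Idx m n → ℝ) (j : Fin n) : ℝ :=
  if h : (j : ℕ) < n - 1 then θ (Sum.inr ⟨j, h⟩) else 0

/-- The degree `d_i = Σ_j x_{ij}` of event `i`. -/
def degVec (X : Fin m → Fin n → Ω → ℝ) (ω : Ω) (i : Fin m) : ℝ := ∑ j, X i j ω

/-- The degree `b_j = Σ_i x_{ij}` of actor `j`. -/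
def bVec (X : Fin m → Fin n → Ω → ℝ) (ω : Ω) (j : Fin n) : ℝ := ∑ i, X i j ω

/-- The vector `g = (d_1, …, d_m, b_1, …, b_{n-1})`. -/
def gvec (X : Fin m → Fin n → Ω → ℝ) (ω : Ω) : Idx m n → ℝ :=
  Sum.elim (degVec X ω) (fun j => bVec X ω (Fin.castLE (Nat.sub_le n 1) j))

/-- The affiliation network model: the `x_{ij}` are mutually independent `{0,1}`-valued
random variables with `P(x_{ij} = 1) = e^{α_i+β_j}/(1+e^{α_i+β_j})` (convention `β_n = 0`). -/
structure IsAffilModel [MeasurableSpace Ω] (P : Measure Ω)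
    (θ : Idx m n → ℝ) (X : Fin m → Fin n → Ω → ℝ) : Prop where
  isProb : IsProbabilityMeasure P
  meas : ∀ i j, Measurable (X i j)
  binary : ∀ i j ω, X i j ω = 0 ∨ X i j ω = 1
  indep : iIndepFun
    (fun p : Fin m × Fin n => X p.1 p.2) P
  prob_one : ∀ i j, P {ω | X i j ω = 1} = ENNReal.ofReal (pf (alphaF θ i + betaF θ j))

/-- The expectation `E g`. -/
def Eg [MeasurableSpace Ω] (P : Measure Ω) (X : Fin m → Fin n → Ω → ℝ) (k : Idx m n) : ℝ :=
  ∫ ω, gvec X ω k ∂P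

/-- The likelihood equations: `θ` is an MLE for the observed degrees `(d, b)`. -/
def IsMLE (d : Fin m → ℝ) (b : Fin (n - 1) → ℝ) (θ : Idx m n → ℝ) : Prop :=
  (∀ i, d i = ∑ j : Fin n, pf (alphaF θ i + betaF θ j)) ∧
  (∀ j : Fin (n - 1), b j = ∑ i : Fin m, pf (alphaF θ i + θ (Sum.inr j)))

/-- `θ` is an MLE for the degrees observed at the sample point `ω`. -/
def IsMLEat (X : Fin m → Fin n → Ω → ℝ) (ω : Ω) (θ : Idx m n → ℝ) : Prop :=
  IsMLE (degVec X ω) (fun j => bVec X ω (Fin.castLE (Nat.sub_le n 1) j)) θ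

/-- The Fisher information matrix `V(θ)`. -/
def fisher (θ : Idx m n → ℝ) : Matrix (Idx m n) (Idx m n) ℝ :=
  fun k l => match k, l with
  | Sum.inl i, Sum.inl i' => if i = i' then ∑ j : Fin n, pf' (alphaF θ i + betaF θ j) else 0
  | Sum.inl i, Sum.inr j => pf' (alphaF θ i + θ (Sum.inr j))
  | Sum.inr j, Sum.inl i => pf' (alphaF θ i + θ (Sum.inr j))
  | Sum.inr j, Sum.inr j' => if j = j' then ∑ i : Fin m, pf' (alphaF θ i + θ (Sum.inr j)) else 0

/-- `v_{i,m+n} := v_{ii} - Σ_{j ≠ i} v_{ij}`. -/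
def vRem (V : Matrix (Idx m n) (Idx m n) ℝ) (i : Idx m n) : ℝ :=
  V i i - ∑ j ∈ Finset.univ.erase i, V i j

/-- `v_{m+n,m+n} := Σ_{i=1}^{m+n-1} v_{i,m+n}`. -/
def vnnOf (V : Matrix (Idx m n) (Idx m n) ℝ) : ℝ := ∑ i, vRem V i

/-- `v_{m+n,m+n}` for the Fisher information matrix,
`Σ_{i=1}^m (v_{ii} - Σ_{j=m+1}^{m+n-1} v_{ij})`. -/
def vnnFisher (θ : Idx m n → ℝ) : ℝ :=
  ∑ i : Fin m,
    (fisher θ (Sum.inl i) (Sum.inl i) - ∑ j : Fin (n - 1), fisher θ (Sum.inl i) (Sum.inr j))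

/-- The approximating matrix `S` built from `V`, with `1/v_{m+n,m+n}` replaced by `1/c`. -/
def approxSWith (V : Matrix (Idx m n) (Idx m n) ℝ) (c : ℝ) : Matrix (Idx m n) (Idx m n) ℝ :=
  fun k l => match k, l with
  | Sum.inl i, Sum.inl i' => (if i = i' then (V (Sum.inl i) (Sum.inl i))⁻¹ else 0) + c⁻¹
  | Sum.inr j, Sum.inr j' => (if j = j' then (V (Sum.inr j) (Sum.inr j))⁻¹ else 0) + c⁻¹
  | _, _ => -c⁻¹

/-- The approximating matrix `S` built from a matrix `V` in the class `L_{m,n}(q,Q)`. -/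
def approxS (V : Matrix (Idx m n) (Idx m n) ℝ) : Matrix (Idx m n) (Idx m n) ℝ :=
  approxSWith V (vnnOf V)

/-- The approximating matrix `S` built from the Fisher information matrix `V(θ)`. -/
def fisherS (θ : Idx m n → ℝ) : Matrix (Idx m n) (Idx m n) ℝ :=
  approxSWith (fisher θ) (vnnFisher θ)

/-- Membership in the matrix class `L_{m,n}(q,Q)`. -/
structure MemL (m n : ℕ) (q Q : ℝ) (V : Matrix (Idx m n) (Idx m n) ℝ) : Prop where
  symm : V.IsSymm
  nonneg : ∀ i j, 0 ≤ V i j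
  zero_ll : ∀ a b : Fin m, a ≠ b → V (Sum.inl a) (Sum.inl b) = 0
  zero_rr : ∀ a b : Fin (n - 1), a ≠ b → V (Sum.inr a) (Sum.inr b) = 0
  cross_lb : ∀ (a : Fin m) (b : Fin (n - 1)), q ≤ V (Sum.inl a) (Sum.inr b)
  cross_ub : ∀ (a : Fin m) (b : Fin (n - 1)), V (Sum.inl a) (Sum.inr b) ≤ Q
  diag_l_lb : ∀ a : Fin m,
    q ≤ V (Sum.inl a) (Sum.inl a) - ∑ b : Fin (n - 1), V (Sum.inl a) (Sum.inr b)
  diag_l_ub : ∀ a : Fin m,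
    V (Sum.inl a) (Sum.inl a) - ∑ b : Fin (n - 1), V (Sum.inl a) (Sum.inr b) ≤ Q
  diag_r : ∀ b : Fin (n - 1), V (Sum.inr b) (Sum.inr b) = ∑ a : Fin m, V (Sum.inl a) (Sum.inr b)

/-- `‖A‖ := max_{i,j} |a_{ij}|`. -/
def matNorm (A : Matrix (Idx m n) (Idx m n) ℝ) : ℝ :=
  ‖fun p : Idx m n × Idx m n => A p.1 p.2‖

/-- The index (0-based) `i` of `θ ∈ ℝ^{m+n-1}` as an element of `Idx m n`, if it exists. -/
def coordIdx (m n i : ℕ) : Option (Idx m n) :=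
  if h : i < m then some (Sum.inl ⟨i, h⟩)
  else if h' : i - m < n - 1 then some (Sum.inr ⟨i - m, h'⟩)
  else none

/-- The `i`-th coordinate (0-based) of a vector `x ∈ ℝ^{m+n-1}` (junk value `0` out of range). -/
def coordVal (x : Idx m n → ℝ) (i : ℕ) : ℝ := ((coordIdx m n i).map x).getD 0

/-- The upper-left `k × k` block of a matrix indexed by `Idx m n`. -/
def blockK (A : Matrix (Idx m n) (Idx m n) ℝ) (k : ℕ) : Matrix (Fin k) (Fin k) ℝ :=
  fun i j => match coordIdx m n (i : ℕ), coordIdx m n (j : ℕ) with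
    | some a, some b => A a b
    | _, _ => 0

/-- The inverse square root `A^{-1/2}` of a positive semidefinite matrix
(junk value `0` if `A` is not positive semidefinite). -/
def invSqrt {k : ℕ} (A : Matrix (Fin k) (Fin k) ℝ) : Matrix (Fin k) (Fin k) ℝ :=
  letI := Classical.propDecidable A.PosSemidef
  if h : A.PosSemidef then
    (h.1.eigenvectorUnitary.1 * diagonal ((↑) ∘ Real.sqrt ∘ h.1.eigenvalues) *
      (star h.1.eigenvectorUnitary : Matrix (Fin k) (Fin k) ℝ))⁻¹ else 0

/-- The standard Gaussian distribution `N(0, I_k)` on `ℝ^k`. -/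
def stdGaussian (k : ℕ) : Measure (Fin k → ℝ) :=
  Measure.pi fun _ => gaussianReal 0 1

/-- The function `F(θ)` whose components are
`F_i(θ) = d_i - Σ_k f(α_i + β_k)` and `F_{m+j}(θ) = b_j - Σ_k f(α_k + β_j)`. -/
def Fvec (f : ℝ → ℝ) (d : Fin m → ℝ) (b : Fin (n - 1) → ℝ) (θ : Idx m n → ℝ) : Idx m n → ℝ :=
  fun k => match k with
  | Sum.inl i => d i - ∑ j : Fin n, f (alphaF θ i + betaF θ j)
  | Sum.inr j => b j - ∑ i : Fin m, f (alphaF θ i + θ (Sum.inr j))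

/-- The Jacobian matrix `F'(θ)` of `Fvec f d b`. -/
def jacF (f : ℝ → ℝ) (θ : Idx m n → ℝ) : Matrix (Idx m n) (Idx m n) ℝ :=
  fun k l => match k, l with
  | Sum.inl i, Sum.inl i' =>
      if i = i' then -∑ j : Fin n, deriv f (alphaF θ i + betaF θ j) else 0
  | Sum.inl i, Sum.inr j => -deriv f (alphaF θ i + θ (Sum.inr j))
  | Sum.inr j, Sum.inl i => -deriv f (alphaF θ i + θ (Sum.inr j))
  | Sum.inr j, Sum.inr j' =>
      if j = j' then -∑ i : Fin m, deriv f (alphaF θ i + θ (Sum.inr j)) else 0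

/-- The Newton iterates `θ^{(k+1)} = θ^{(k)} - [F'(θ^{(k)})]⁻¹ F(θ^{(k)})`. -/
def newton (f : ℝ → ℝ) (d : Fin m → ℝ) (b : Fin (n - 1) → ℝ) (θ0 : Idx m n → ℝ) :
    ℕ → Idx m n → ℝ
  | 0 => θ0
  | k + 1 =>
    newton f d b θ0 k - (jacF f (newton f d b θ0 k))⁻¹.mulVec (Fvec f d b (newton f d b θ0 k))

/-! Write `V⁻¹ x = (V⁻¹ - S) x + S x`. Each coordinate of the first term is a sum of `m + n - 1`
products bounded by `‖V⁻¹ - S‖ ‖x‖_∞`. The second is explicit: `(S x)_k = x_k / v_kk ± x_{m+n} / v_{m+n,m+n}`,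
and `v_{m+n,m+n} ≥ 0` for `V ∈ L_{m,n}(q,Q)` because only the first `m` rows contribute to it. -/

open Finset

theorem norm_mulVec_le_card_mul {R ι κ : Type*} [SeminormedRing R] [Fintype ι] [Fintype κ]
    (A : Matrix ι κ R) (x : κ → R) :
    ‖A *ᵥ x‖ ≤ Fintype.card κ * ‖fun p : ι × κ => A p.1 p.2‖ * ‖x‖ := by
  refine (pi_norm_le_iff_of_nonneg (by positivity)).2 fun k => ?_
  calc ‖(A *ᵥ x) k‖ ≤ ∑ l, ‖A k l‖ * ‖x l‖ :=
        (norm_sum_le _ _).trans (sum_le_sum fun l _ => norm_mul_le _ _)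
    _ ≤ ∑ _l : κ, ‖fun p : ι × κ => A p.1 p.2‖ * ‖x‖ :=
        sum_le_sum fun l _ => mul_le_mul (norm_le_pi_norm (fun p : ι × κ => A p.1 p.2) (k, l))
          (norm_le_pi_norm x l) (norm_nonneg _) (norm_nonneg _)
    _ = _ := by simp [mul_assoc]

theorem card_idx_eq (hn : 1 ≤ n) : (Fintype.card (Idx m n) : ℝ) = m + n - 1 := by
  simp only [Fintype.card_sum, Fintype.card_fin]
  push_cast [Nat.cast_sub hn]
  ring

theorem approxS_mulVec (V : Matrix (Idx m n) (Idx m n) ℝ) (x : Idx m n → ℝ) (k : Idx m n) :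
    (approxS V *ᵥ x) k =
      x k * (V k k)⁻¹ + Sum.elim (fun _ => (1 : ℝ)) (fun _ => -1) k *
        ((∑ i : Fin m, x (Sum.inl i) - ∑ j : Fin (n - 1), x (Sum.inr j)) * (vnnOf V)⁻¹) := by
  cases k <;>
  simp only [mulVec, dotProduct, approxS, approxSWith, Fintype.sum_sum_type, add_mul, ite_mul,
    zero_mul, sum_add_distrib, sum_ite_eq, mem_univ, if_true, neg_mul, sum_neg_distrib,
    Sum.elim_inl, Sum.elim_inr, ← mul_sum] <;>
  ring

theorem abs_approxS_mulVec_le (V : Matrix (Idx m n) (Idx m n) ℝ) (x : Idx m n → ℝ)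
    (k : Idx m n) (hVk : 0 ≤ V k k) (hvnn : 0 ≤ vnnOf V) :
    |(approxS V *ᵥ x) k| ≤
      |∑ i : Fin m, x (Sum.inl i) - ∑ j : Fin (n - 1), x (Sum.inr j)| / vnnOf V
        + |x k| / V k k := by
  have hsign : |Sum.elim (fun _ => (1 : ℝ)) (fun _ => -1) k| = 1 := by cases k <;> simp
  rw [approxS_mulVec, add_comm]
  refine (abs_add_le _ _).trans_eq ?_
  rw [abs_mul, hsign, one_mul, abs_mul, abs_mul, abs_inv, abs_inv, abs_of_nonneg hvnn,
    abs_of_nonneg hVk, div_eq_mul_inv, div_eq_mul_inv]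

theorem norm_approxS_mulVec_le (V : Matrix (Idx m n) (Idx m n) ℝ) (x : Idx m n → ℝ)
    (hdiag : ∀ k, 0 ≤ V k k) (hvnn : 0 ≤ vnnOf V) :
    ‖approxS V *ᵥ x‖ ≤
      |∑ i : Fin m, x (Sum.inl i) - ∑ j : Fin (n - 1), x (Sum.inr j)| / vnnOf V
        + ⨆ i : Idx m n, |x i| / V i i := by
  have hsup_nonneg : 0 ≤ ⨆ i : Idx m n, |x i| / V i i :=
    Real.iSup_nonneg fun i => div_nonneg (abs_nonneg _) (hdiag i)
  refine (pi_norm_le_iff_of_nonneg (by positivity)).2 fun k => ?_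
  rw [Real.norm_eq_abs]
  refine (abs_approxS_mulVec_le V x k (hdiag k) hvnn).trans (add_le_add_right ?_ _)
  exact le_ciSup (f := fun i => |x i| / V i i) (Set.finite_range _).bddAbove k

section MemL

variable {q Q : ℝ} {V : Matrix (Idx m n) (Idx m n) ℝ}

theorem MemL.vRem_inl (h : MemL m n q Q V) (i : Fin m) :
    vRem V (Sum.inl i) =
      V (Sum.inl i) (Sum.inl i) - ∑ b : Fin (n - 1), V (Sum.inl i) (Sum.inr b) := by
  rw [vRem, sum_erase_eq_sub (mem_univ _), Fintype.sum_sum_type,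
    sum_eq_single i (fun b _ hb => h.zero_ll i b (Ne.symm hb)) (by simp)]
  ring

theorem MemL.vRem_inr (h : MemL m n q Q V) (j : Fin (n - 1)) : vRem V (Sum.inr j) = 0 := by
  rw [vRem, sum_erase_eq_sub (mem_univ _), Fintype.sum_sum_type,
    sum_eq_single j (fun b _ hb => h.zero_rr j b (Ne.symm hb)) (by simp), h.diag_r j]
  simp only [← h.symm.apply (Sum.inl _) (Sum.inr j)]
  ring

theorem MemL.vnnOf_nonneg (h : MemL m n q Q V) (hq : 0 ≤ q) : 0 ≤ vnnOf V := by
  rw [vnnOf, Fintype.sum_sum_type, sum_eq_zero fun j _ => h.vRem_inr j, add_zero]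
  exact sum_nonneg fun i _ => h.vRem_inl i ▸ hq.trans (h.diag_l_lb i)

end MemL

theorem approx_inverse_apply_general
    (c1 : ℝ)
    (m : ℕ → ℕ) (q Q : ℕ → ℝ)
    (hq : ∀ N, 0 < q N)
    (hbound : ∀ N (V : Matrix (Idx (m N) N) (Idx (m N) N) ℝ),
      MemL (m N) N (q N) (Q N) V →
        matNorm (V⁻¹ - approxS V) ≤ c1 * Q N ^ 2 / (q N ^ 3 * m N * N)) :
    ∀ᶠ N in atTop, ∀ V : Matrix (Idx (m N) N) (Idx (m N) N) ℝ,
      MemL (m N) N (q N) (Q N) V →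
        ∀ x : Idx (m N) N → ℝ,
          ‖V⁻¹.mulVec x‖ ≤
            c1 * Q N ^ 2 * ((m N : ℝ) + N - 1) * ‖x‖ / (q N ^ 3 * m N * N)
            + |∑ i : Fin (m N), x (Sum.inl i) - ∑ j : Fin (N - 1), x (Sum.inr j)| / vnnOf V
            + ⨆ i : Idx (m N) N, |x i| / V i i := by
  filter_upwards [eventually_ge_atTop 1] with N hN V hV x
  have hdim : (0 : ℝ) ≤ m N + N - 1 := by
    have : (1 : ℝ) ≤ N := by exact_mod_cast hN
    linarith [(m N).cast_nonneg (α := ℝ)]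
  have herr : ‖(V⁻¹ - approxS V) *ᵥ x‖ ≤
      c1 * Q N ^ 2 * ((m N : ℝ) + N - 1) * ‖x‖ / (q N ^ 3 * m N * N) :=
    calc ‖(V⁻¹ - approxS V) *ᵥ x‖
        ≤ Fintype.card (Idx (m N) N) * matNorm (V⁻¹ - approxS V) * ‖x‖ :=
          norm_mulVec_le_card_mul _ x
      _ ≤ (m N + N - 1) * (c1 * Q N ^ 2 / (q N ^ 3 * m N * N)) * ‖x‖ := by
          rw [card_idx_eq hN]
          gcongr
          exact hbound N V hV
      _ = _ := by ring
  rw [← sub_add_cancel V⁻¹ (approxS V), add_mulVec, add_assoc]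
  exact (norm_add_le _ _).trans <| add_le_add herr <|
    norm_approxS_mulVec_le V x (fun k => hV.nonneg k k) (hV.vnnOf_nonneg (hq N).le)

/-- Lemma 2: bound for `‖V⁻¹ x‖_∞`. -/
theorem approx_inverse_apply
    (c1 : ℝ) (hc1 : 0 < c1)
    (m : ℕ → ℕ) (q Q : ℕ → ℝ)
    (hmn : ∀ N, m N ≤ N) (hq : ∀ N, 0 < q N) (hqQ : ∀ N, q N ≤ Q N)
    (ho : Tendsto (fun N => Q N / q N / N) atTop (𝓝 0))
    (hbound : ∀ N (V : Matrix (Idx (m N) N) (Idx (m N) N) ℝ),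
      MemL (m N) N (q N) (Q N) V →
        matNorm (V⁻¹ - approxS V) ≤ c1 * Q N ^ 2 / (q N ^ 3 * m N * N)) :
    ∀ᶠ N in atTop, ∀ V : Matrix (Idx (m N) N) (Idx (m N) N) ℝ,
      MemL (m N) N (q N) (Q N) V →
        ∀ x : Idx (m N) N → ℝ,
          ‖V⁻¹.mulVec x‖ ≤
            c1 * Q N ^ 2 * ((m N : ℝ) + N - 1) * ‖x‖ / (q N ^ 3 * m N * N)
            + |∑ i : Fin (m N), x (Sum.inl i) - ∑ j : Fin (N - 1), x (Sum.inr j)| / vnnOf V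
            + ⨆ i : Idx (m N) N, |x i| / V i i :=
  approx_inverse_apply_general c1 m q Q hq hbound

end Affiliation
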